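/- arXiv:2510.14105 — 3 statements merged into one kernel-verified Lean document; each statement's English description precedes it below -/
import Mathlib

section
/- (Lower semicontinuity of the weighted variation.) Let w : ℝ^n → (0,∞] be lower semicontinuous and Ω ⊆ ℝ^n open. Suppose {f_k} ⊆ BV(Ω;w) and f_k → f in L¹_loc(Ω;w) (i.e. ∫_K |f_k − f| w dx → 0 for every compact K ⊆ Ω). Then ‖Df‖_w(Ω) ≤ liminf_{k→∞} ‖Df_k‖_w(Ω). -/
open MeasureTheory Metric ENNReal Filter
open scoped Topology RealInnerProductSpace ENNReal NNReal

noncomputable section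

/-- Euclidean space `ℝ^n`. -/
abbrev Euc (n : ℕ) : Type := EuclideanSpace ℝ (Fin n)

/-- The divergence of a vector field `φ : ℝ^n → ℝ^n`, defined via `fderiv`
(which, by Rademacher's theorem, is defined a.e. when `φ` is Lipschitz). -/
def divg {n : ℕ} (φ : Euc n → Euc n) (x : Euc n) : ℝ :=
  ∑ i, fderiv ℝ φ x (EuclideanSpace.single i 1) i

/-- `φ ∈ Lip_c(U; ℝ^n)`: compactly supported Lipschitz vector fields with support in `U`. -/
def IsLipc {n : ℕ} (U : Set (Euc n)) (φ : Euc n → Euc n) : Prop :=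
  (∃ K, LipschitzWith K φ) ∧ HasCompactSupport φ ∧ tsupport φ ⊆ U

/-- The weighted variation `‖Df‖_w(U) = sup {∫_U f div φ : φ ∈ Lip_c(U;ℝ^n), |φ| ≤ w}`. -/
def wVar {n : ℕ} (U : Set (Euc n)) (w : Euc n → ℝ≥0∞) (f : Euc n → ℝ) : ℝ≥0∞ :=
  ⨆ (φ : Euc n → Euc n) (_ : IsLipc U φ ∧ ∀ x, (‖φ x‖₊ : ℝ≥0∞) ≤ w x),
    ENNReal.ofReal (∫ x in U, f x * divg φ x)

/-- `f ∈ L¹(Ω; w)`. -/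
def MemL1w {n : ℕ} (Ω : Set (Euc n)) (w : Euc n → ℝ≥0∞) (f : Euc n → ℝ) : Prop :=
  AEStronglyMeasurable f (volume.restrict Ω) ∧ (∫⁻ x in Ω, ‖f x‖₊ * w x) < ⊤

/-- `f ∈ BV(Ω; w)`: bounded `w`-variation.  (Unweighted `BV(Ω)` is the case `w ≡ 1`.) -/
def MemBVw {n : ℕ} (Ω : Set (Euc n)) (w : Euc n → ℝ≥0∞) (f : Euc n → ℝ) : Prop :=
  MemL1w Ω w f ∧ wVar Ω w f < ⊤

/-- `V ⋐ Ω`: `V` is open and compactly contained in `Ω`. -/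
def CpctIn {n : ℕ} (V Ω : Set (Euc n)) : Prop :=
  IsOpen V ∧ IsCompact (closure V) ∧ closure V ⊆ Ω

/-- `f ∈ L¹_loc(Ω; w)`. -/
def MemL1wLoc {n : ℕ} (Ω : Set (Euc n)) (w : Euc n → ℝ≥0∞) (f : Euc n → ℝ) : Prop :=
  AEStronglyMeasurable f (volume.restrict Ω) ∧
    ∀ K : Set (Euc n), IsCompact K → K ⊆ Ω → (∫⁻ x in K, ‖f x‖₊ * w x) < ⊤

/-- `f ∈ BV_loc(Ω; w)`: locally bounded `w`-variation. -/
def MemBVwLoc {n : ℕ} (Ω : Set (Euc n)) (w : Euc n → ℝ≥0∞) (f : Euc n → ℝ) : Prop :=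
  MemL1wLoc Ω w f ∧ ∀ V : Set (Euc n), CpctIn V Ω → wVar V w f < ⊤

/-- `μ` is the variation (Radon) measure `‖Df‖` of `f` on `Ω`: it is carried by `Ω`,
finite on compact subsets of `Ω`, and `μ(V) = ‖Df‖(V)` for all open `V ⋐ Ω`. -/
def IsVarMeasure {n : ℕ} (Ω : Set (Euc n)) (f : Euc n → ℝ) (μ : Measure (Euc n)) : Prop :=
  μ Ωᶜ = 0 ∧ (∀ K : Set (Euc n), IsCompact K → K ⊆ Ω → μ K < ⊤) ∧
    ∀ V : Set (Euc n), CpctIn V Ω → μ V = wVar V (fun _ => 1) f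

/-- `w` is an everywhere `A₁` weight with constant `C`:
`w` is locally integrable and `⨍_B w ≤ C · inf_B w` for every ball `B`. -/
def IsEA1 {n : ℕ} (w : Euc n → ℝ≥0∞) (C : ℝ≥0∞) : Prop :=
  Measurable w ∧
  (∀ (x : Euc n) (r : ℝ), 0 < r → (∫⁻ y in ball x r, w y) < ⊤) ∧
  ∀ (x : Euc n) (r : ℝ), 0 < r →
    (∫⁻ y in ball x r, w y) / volume (ball x r) ≤ C * ⨅ y ∈ ball x r, w y

/-- `|a - b|` for extended nonnegative reals. -/
def eabs (a b : ℝ≥0∞) : ℝ≥0∞ := (a - b) ⊔ (b - a)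

/-- `x` is a Lebesgue point of the weight `v`. -/
def IsLebPt {n : ℕ} (v : Euc n → ℝ≥0∞) (x : Euc n) : Prop :=
  Tendsto (fun r : ℝ => (∫⁻ y in ball x r, eabs (v y) (v x)) / volume (ball x r))
    (𝓝[>] (0 : ℝ)) (𝓝 0)

/-- `f` is `v`-approximable: `‖Df‖`-a.e. point is a Lebesgue point of `v`. -/
def Approximable {n : ℕ} (Ω : Set (Euc n)) (f : Euc n → ℝ) (v : Euc n → ℝ≥0∞) : Prop :=
  ∀ μ : Measure (Euc n), IsVarMeasure Ω f μ → ∀ᵐ x ∂μ, IsLebPt v x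

/-- `g` is the weak gradient of `f` on `Ω`. -/
def HasWeakGradient {n : ℕ} (Ω : Set (Euc n)) (f : Euc n → ℝ) (g : Euc n → Euc n) : Prop :=
  AEStronglyMeasurable g (volume.restrict Ω) ∧
  ∀ φ : Euc n → Euc n, IsLipc Ω φ →
    ∫ x in Ω, f x * divg φ x = -∫ x in Ω, ⟪g x, φ x⟫

/-- `f ∈ W^{1,1}(Ω; w)`. -/
def MemW11w {n : ℕ} (Ω : Set (Euc n)) (w : Euc n → ℝ≥0∞) (f : Euc n → ℝ) : Prop :=
  MemL1w Ω w f ∧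
    ∃ g : Euc n → Euc n, HasWeakGradient Ω f g ∧ (∫⁻ x in Ω, ‖g x‖₊ * w x) < ⊤

/-- First `n` coordinates of a point of `ℝ^{n+1}`. -/
def projE {n : ℕ} (z : Euc (n + 1)) : Euc n := WithLp.toLp 2 (fun i : Fin n => z i.castSucc)

/-- Last coordinate of a point of `ℝ^{n+1}`. -/
def lastE {n : ℕ} (z : Euc (n + 1)) : ℝ := z (Fin.last n)

/-- The subgraph `A_w = {(x, y) : x ∈ A, 0 < y < w x} ⊆ ℝ^{n+1}`. -/
def subgraph {n : ℕ} (A : Set (Euc n)) (w : Euc n → ℝ≥0∞) : Set (Euc (n + 1)) :=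
  {z | projE z ∈ A ∧ 0 < lastE z ∧ ENNReal.ofReal (lastE z) < w (projE z)}

/-- The uncentered Hardy–Littlewood maximal function of a measure. -/
def maxFn {N : ℕ} (μ : Measure (Euc N)) (x : Euc N) : ℝ≥0∞ :=
  ⨆ (z : Euc N) (r : ℝ) (_ : 0 < r) (_ : x ∈ ball z r),
    μ (ball z r) / volume (ball z r)

end

section Aux

lemma divg_eq_zero_of_nmem_tsupport {n : ℕ} {φ : Euc n → Euc n} {x : Euc n}
    (hx : x ∉ tsupport φ) : divg φ x = 0 := by
  have h0 : φ =ᶠ[𝓝 x] 0 := by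
    filter_upwards [(isClosed_tsupport φ).isOpen_compl.mem_nhds hx] with y hy
    exact image_eq_zero_of_notMem_tsupport hy
  have hfd : fderiv ℝ φ x = fderiv ℝ (0 : Euc n → Euc n) x := h0.fderiv_eq
  have : fderiv ℝ (0 : Euc n → Euc n) x = 0 := fderiv_const_apply 0
  simp [divg, hfd, this]

lemma norm_divg_le {n : ℕ} {L : ℝ≥0} {φ : Euc n → Euc n} (hL : LipschitzWith L φ)
    (x : Euc n) : ‖divg φ x‖ ≤ n * L := by
  have h1 : ∀ i : Fin n, ‖(fderiv ℝ φ x (EuclideanSpace.single i 1)) i‖ ≤ (L : ℝ) := by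
    intro i
    have hv : ‖fderiv ℝ φ x (EuclideanSpace.single i 1)‖ ≤ (L : ℝ) := by
      calc ‖fderiv ℝ φ x (EuclideanSpace.single i 1)‖
          ≤ ‖fderiv ℝ φ x‖ * ‖EuclideanSpace.single i (1:ℝ)‖ := (fderiv ℝ φ x).le_opNorm _
        _ ≤ (L : ℝ) * 1 :=
            mul_le_mul (norm_fderiv_le_of_lipschitz ℝ hL)
              (by simp [EuclideanSpace.norm_single]) (norm_nonneg _) L.coe_nonneg
        _ = (L : ℝ) := mul_one _
    have h2 : ‖(fderiv ℝ φ x (EuclideanSpace.single i 1)) i‖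
        ≤ ‖fderiv ℝ φ x (EuclideanSpace.single i 1)‖ := by
      set v := fderiv ℝ φ x (EuclideanSpace.single i 1) with hv'
      have h3 := abs_real_inner_le_norm (EuclideanSpace.single i (1:ℝ)) v
      rw [EuclideanSpace.inner_single_left] at h3
      simpa [EuclideanSpace.norm_single, Real.norm_eq_abs] using h3
    linarith
  calc ‖divg φ x‖ ≤ ∑ i, ‖(fderiv ℝ φ x (EuclideanSpace.single i 1)) i‖ := norm_sum_le _ _
    _ ≤ ∑ _i : Fin n, (L : ℝ) := Finset.sum_le_sum fun i _ => h1 i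
    _ = n * L := by simp [mul_comm]

lemma measurable_divg {n : ℕ} (φ : Euc n → Euc n) : Measurable (divg φ) := by
  apply Finset.measurable_sum
  intro i _
  exact ((EuclideanSpace.proj i).continuous.measurable).comp
    (measurable_fderiv_apply_const ℝ φ _)

end Aux

/-- **Lower semicontinuity of the weighted variation.** If `f_k ∈ BV(Ω;w)` and
`f_k → f` in `L¹_loc(Ω;w)`, then `‖Df‖_w(Ω) ≤ liminf_k ‖Df_k‖_w(Ω)`. -/
theorem stmt_9 {n : ℕ} (Ω : Set (Euc n)) (hΩ : IsOpen Ω)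
    (w : Euc n → ℝ≥0∞) (hw0 : ∀ x, 0 < w x) (hlsc : LowerSemicontinuous w)
    (f : Euc n → ℝ) (F : ℕ → Euc n → ℝ)
    (hF : ∀ k, MemBVw Ω w (F k))
    (hconv : ∀ K : Set (Euc n), IsCompact K → K ⊆ Ω →
      Tendsto (fun k => ∫⁻ x in K, ‖F k x - f x‖₊ * w x) atTop (𝓝 0)) :
    wVar Ω w f ≤ Filter.liminf (fun k => wVar Ω w (F k)) atTop := by
  refine iSup₂_le fun φ hφ => ?_
  obtain ⟨⟨⟨L, hL⟩, hcs, hsupp⟩, hφw⟩ := hφ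
  set K := tsupport φ with hKdef
  have hKc : IsCompact K := hcs
  have hKΩ : K ⊆ Ω := hsupp
  have hKm : MeasurableSet K := hKc.isClosed.measurableSet
  -- a positive lower bound for `w` on the compact set `K`
  obtain ⟨N, hN0, hNw⟩ : ∃ N : ℕ, N ≠ 0 ∧ ∀ x ∈ K, ((N : ℝ≥0∞))⁻¹ ≤ w x := by
    have hopen : ∀ m : ℕ, IsOpen (w ⁻¹' Set.Ioi ((m : ℝ≥0∞))⁻¹) := fun m =>
      hlsc.isOpen_preimage _
    have hcover : K ⊆ ⋃ m : ℕ, w ⁻¹' Set.Ioi ((m : ℝ≥0∞))⁻¹ := by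
      intro x _
      obtain ⟨m, hm⟩ := ENNReal.exists_inv_nat_lt (hw0 x).ne'
      exact Set.mem_iUnion.2 ⟨m, hm⟩
    obtain ⟨t, ht⟩ := hKc.elim_finite_subcover _ hopen hcover
    refine ⟨t.sup id + 1, Nat.succ_ne_zero _, fun x hx => ?_⟩
    obtain ⟨m, hmt, hm⟩ := Set.mem_iUnion₂.1 (ht hx)
    refine le_trans ?_ (le_of_lt hm)
    refine ENNReal.inv_le_inv.2 ?_
    exact_mod_cast le_trans (Finset.le_sup (f := id) hmt) (Nat.le_succ _)
  set c : ℝ≥0∞ := ((N : ℝ≥0∞))⁻¹ with hcdef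
  have hc0 : c ≠ 0 := ENNReal.inv_ne_zero.2 (ENNReal.natCast_ne_top N)
  have hctop : c ≠ ⊤ := ENNReal.inv_ne_top.2 (by exact_mod_cast hN0)
  have hcinv : c⁻¹ ≠ ⊤ := by
    rw [hcdef, inv_inv]; exact ENNReal.natCast_ne_top N
  set M : ℝ≥0∞ := (n : ℝ≥0∞) * (L : ℝ≥0∞) with hMdef
  have hMne : M ≠ ⊤ := ENNReal.mul_ne_top (ENNReal.natCast_ne_top n) ENNReal.coe_ne_top
  have hMc : M * c⁻¹ ≠ ⊤ := ENNReal.mul_ne_top hMne hcinv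
  have hdiv : ∀ x, (‖divg φ x‖₊ : ℝ≥0∞) ≤ M := by
    intro x
    rw [← enorm_eq_nnnorm, ← ofReal_norm]
    calc ENNReal.ofReal ‖divg φ x‖ ≤ ENNReal.ofReal ((n : ℝ) * (L : ℝ)) :=
          ENNReal.ofReal_le_ofReal (norm_divg_le hL x)
      _ = M := by
          rw [ENNReal.ofReal_mul (by positivity)]
          simp [hMdef, ENNReal.ofReal_natCast, ENNReal.ofReal_coe_nnreal]
  -- the key estimate
  have key : ∀ g : Euc n → ℝ,
      (∫⁻ x in Ω, (‖g x‖₊ : ℝ≥0∞) * (‖divg φ x‖₊ : ℝ≥0∞))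
        ≤ (M * c⁻¹) * ∫⁻ x in K, (‖g x‖₊ : ℝ≥0∞) * w x := by
    intro g
    calc (∫⁻ x in Ω, (‖g x‖₊ : ℝ≥0∞) * (‖divg φ x‖₊ : ℝ≥0∞))
        ≤ ∫⁻ x, (‖g x‖₊ : ℝ≥0∞) * (‖divg φ x‖₊ : ℝ≥0∞) :=
          setLIntegral_le_lintegral _ _
      _ = ∫⁻ x, K.indicator (fun x => (‖g x‖₊ : ℝ≥0∞) * (‖divg φ x‖₊ : ℝ≥0∞)) x := by
          congr 1; funext x
          by_cases hx : x ∈ K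
          · rw [Set.indicator_of_mem hx]
          · rw [Set.indicator_of_notMem hx, divg_eq_zero_of_nmem_tsupport hx]; simp
      _ = ∫⁻ x in K, (‖g x‖₊ : ℝ≥0∞) * (‖divg φ x‖₊ : ℝ≥0∞) := lintegral_indicator hKm _
      _ ≤ ∫⁻ x in K, (M * c⁻¹) * ((‖g x‖₊ : ℝ≥0∞) * w x) := by
          refine setLIntegral_mono' hKm fun x hx => ?_
          have h1 : (‖divg φ x‖₊ : ℝ≥0∞) ≤ M * (c⁻¹ * w x) := by
            calc (‖divg φ x‖₊ : ℝ≥0∞) ≤ M := hdiv x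
              _ = M * 1 := (mul_one _).symm
              _ ≤ M * (c⁻¹ * w x) := by
                  refine mul_le_mul_right ?_ _
                  rw [← ENNReal.inv_mul_cancel hc0 hctop]
                  exact mul_le_mul_right (hNw x hx) _
          calc (‖g x‖₊ : ℝ≥0∞) * (‖divg φ x‖₊ : ℝ≥0∞)
              ≤ (‖g x‖₊ : ℝ≥0∞) * (M * (c⁻¹ * w x)) := mul_le_mul_right h1 _
            _ = (M * c⁻¹) * ((‖g x‖₊ : ℝ≥0∞) * w x) := by ring
      _ = (M * c⁻¹) * ∫⁻ x in K, (‖g x‖₊ : ℝ≥0∞) * w x := lintegral_const_mul' _ _ hMc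
  -- integrability of `F k * divg φ`
  have hintF : ∀ k, Integrable (fun x => F k x * divg φ x) (volume.restrict Ω) := by
    intro k
    refine ⟨(hF k).1.1.mul (measurable_divg φ).aestronglyMeasurable, ?_⟩
    have : (∫⁻ x in Ω, (‖F k x * divg φ x‖₊ : ℝ≥0∞)) < ⊤ := by
      have heq : (fun x => (‖F k x * divg φ x‖₊ : ℝ≥0∞))
          = fun x => (‖F k x‖₊ : ℝ≥0∞) * (‖divg φ x‖₊ : ℝ≥0∞) := by
        funext x; rw [nnnorm_mul, ENNReal.coe_mul]
      rw [heq]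
      refine lt_of_le_of_lt (key _) ?_
      refine ENNReal.mul_lt_top hMc.lt_top ?_
      refine lt_of_le_of_lt ?_ (hF k).1.2
      exact lintegral_mono' (Measure.restrict_mono hKΩ le_rfl) le_rfl
    exact this
  by_cases hfi : Integrable (fun x => f x * divg φ x) (volume.restrict Ω)
  · set h : ℕ → ℝ≥0∞ := fun k => ∫⁻ x in K, (‖F k x - f x‖₊ : ℝ≥0∞) * w x with hhdef
    have hh : Tendsto h atTop (𝓝 0) := hconv K hKc hKΩ
    have hbound : ∀ᶠ k in atTop,
        dist (∫ x in Ω, F k x * divg φ x) (∫ x in Ω, f x * divg φ x)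
          ≤ ((M * c⁻¹) * h k).toReal := by
      filter_upwards [hh.eventually (gt_mem_nhds (by norm_num : (0 : ℝ≥0∞) < 1))] with k hk1
      have hfin : (M * c⁻¹) * h k ≠ ⊤ :=
        ENNReal.mul_ne_top hMc (hk1.trans_le le_top).ne
      rw [dist_eq_norm, ← integral_sub (hintF k) hfi]
      have heq : (fun x => F k x * divg φ x - f x * divg φ x)
          = fun x => (F k x - f x) * divg φ x := by funext x; ring
      rw [heq]
      calc ‖∫ x in Ω, (F k x - f x) * divg φ x‖
          ≤ (∫⁻ x in Ω, ENNReal.ofReal ‖(F k x - f x) * divg φ x‖).toReal :=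
            norm_integral_le_lintegral_norm _
        _ ≤ ((M * c⁻¹) * h k).toReal := by
            apply ENNReal.toReal_mono hfin
            calc (∫⁻ x in Ω, ENNReal.ofReal ‖(F k x - f x) * divg φ x‖)
                = ∫⁻ x in Ω, (‖F k x - f x‖₊ : ℝ≥0∞) * (‖divg φ x‖₊ : ℝ≥0∞) := by
                  congr 1; funext x
                  rw [ofReal_norm, enorm_eq_nnnorm, nnnorm_mul, ENNReal.coe_mul]
              _ ≤ (M * c⁻¹) * h k := key _
    have htR : Tendsto (fun k => ((M * c⁻¹) * h k).toReal) atTop (𝓝 0) := by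
      have h1 : Tendsto (fun k => (M * c⁻¹) * h k) atTop (𝓝 0) := by
        simpa using ENNReal.Tendsto.const_mul hh (Or.inr hMc)
      have h2 := (ENNReal.tendsto_toReal (by simp : (0 : ℝ≥0∞) ≠ ⊤)).comp h1
      rw [ENNReal.toReal_zero] at h2
      exact h2
    have ht : Tendsto (fun k => ∫ x in Ω, F k x * divg φ x) atTop
        (𝓝 (∫ x in Ω, f x * divg φ x)) := by
      rw [tendsto_iff_dist_tendsto_zero]
      exact squeeze_zero' (Eventually.of_forall fun k => dist_nonneg) hbound htR
    have hlim := ((ENNReal.continuous_ofReal.tendsto _).comp ht).liminf_eq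
    rw [show ENNReal.ofReal (∫ x in Ω, f x * divg φ x)
        = Filter.liminf (fun k => ENNReal.ofReal (∫ x in Ω, F k x * divg φ x)) atTop
        from hlim.symm]
    refine liminf_le_liminf (Eventually.of_forall fun k => ?_)
    exact le_iSup₂ (f := fun ψ (_ : IsLipc Ω ψ ∧ ∀ x, (‖ψ x‖₊ : ℝ≥0∞) ≤ w x) =>
      ENNReal.ofReal (∫ x in Ω, F k x * divg ψ x)) φ ⟨⟨⟨L, hL⟩, hcs, hsupp⟩, hφw⟩
  · rw [integral_undef hfi]
    simp
end

section
/- Let w be an everywhere A₁ weight on ℝ^n that is lower semicontinuous, Ω ⊆ ℝ^n open, f ∈ BV(Ω;w), and 0 < δ < 1. If f is w-approximable, then f is w^δ-approximable. -/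
open MeasureTheory Metric ENNReal Filter
open scoped Topology RealInnerProductSpace ENNReal NNReal

/-- Let `w ∈ A₁^*`, `f ∈ BV(Ω;w)`, and `0 < δ < 1`. If `f` is
`w`-approximable, then `f` is `w^δ`-approximable. -/
theorem stmt_13 {n : ℕ} (Ω : Set (Euc n)) (hΩ : IsOpen Ω)
    (w : Euc n → ℝ≥0∞) (hw0 : ∀ x, 0 < w x) (hlsc : LowerSemicontinuous w)
    (C : ℝ≥0∞) (hA1 : IsEA1 w C)
    (δ : ℝ) (hδ0 : 0 < δ) (hδ1 : δ < 1)
    (f : Euc n → ℝ) (hf : MemBVw Ω w f) (happ : Approximable Ω f w) :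
    Approximable Ω f (fun x => w x ^ δ) := by
  -- Auxiliary facts
  have hδ1' : δ ≤ 1 := hδ1.le
  -- pointwise: `eabs (a^δ) (b^δ) ≤ (eabs a b)^δ`
  have habs : ∀ a b : ℝ≥0∞, eabs (a ^ δ) (b ^ δ) ≤ eabs a b ^ δ := by
    intro a b
    have key : ∀ u v : ℝ≥0∞, u ^ δ - v ^ δ ≤ (u - v) ^ δ := by
      intro u v
      rw [tsub_le_iff_right]
      calc u ^ δ ≤ ((u - v) + v) ^ δ := ENNReal.rpow_le_rpow le_tsub_add hδ0.le
        _ ≤ (u - v) ^ δ + v ^ δ := ENNReal.rpow_add_le_add_rpow _ _ hδ0.le hδ1'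
    refine sup_le ?_ ?_
    · exact (key a b).trans (ENNReal.rpow_le_rpow le_sup_left hδ0.le)
    · exact (key b a).trans (ENNReal.rpow_le_rpow le_sup_right hδ0.le)
  -- main pointwise implication on Lebesgue points
  have hleb : ∀ x : Euc n, IsLebPt w x → IsLebPt (fun y => w y ^ δ) x := by
    intro x hx
    set g : Euc n → ℝ≥0∞ := fun y => eabs (w y) (w x) with hg_def
    have hg_meas : Measurable g := (hA1.1.sub measurable_const).sup (measurable_const.sub hA1.1)
    -- the key averaged inequality
    have key : ∀ r : ℝ, 0 < r →
        (∫⁻ y in ball x r, eabs ((w y) ^ δ) ((w x) ^ δ)) / volume (ball x r)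
          ≤ ((∫⁻ y in ball x r, g y) / volume (ball x r)) ^ δ := by
      intro r hr
      set V : ℝ≥0∞ := volume (ball x r) with hV_def
      have hV0 : V ≠ 0 := (measure_ball_pos volume x hr).ne'
      have hVt : V ≠ ⊤ := measure_ball_lt_top.ne
      set ν := volume.restrict (ball x r) with hν_def
      -- step 1: pointwise bound
      have step1 : (∫⁻ y, eabs ((w y) ^ δ) ((w x) ^ δ) ∂ν) ≤ ∫⁻ y, g y ^ δ ∂ν :=
        lintegral_mono fun y => habs (w y) (w x)
      -- step 2: Hölder
      have hpq : (1 / δ).HolderConjugate (1 / (1 - δ)) := by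
        rw [Real.holderConjugate_iff]
        constructor
        · rw [lt_div_iff₀ hδ0, one_mul]; exact hδ1
        · rw [show (1/δ)⁻¹ = δ by field_simp, show (1/(1-δ))⁻¹ = 1 - δ by field_simp]; ring
      have step2 : (∫⁻ y, g y ^ δ ∂ν) ≤ (∫⁻ y, g y ∂ν) ^ δ * V ^ (1 - δ) := by
        have h := ENNReal.lintegral_mul_le_Lp_mul_Lq ν hpq
          (f := fun y => g y ^ δ) (g := fun _ => (1 : ℝ≥0∞))
          (hg_meas.pow_const δ).aemeasurable aemeasurable_const
        have hνuniv : ν Set.univ = V := by rw [hν_def, Measure.restrict_apply_univ]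
        simp only [Pi.mul_apply, mul_one, ENNReal.one_rpow, lintegral_one,
          one_div_one_div, hνuniv] at h
        calc (∫⁻ y, g y ^ δ ∂ν)
            ≤ (∫⁻ y, (g y ^ δ) ^ (1 / δ) ∂ν) ^ δ * V ^ (1 - δ) := h
          _ = (∫⁻ y, g y ∂ν) ^ δ * V ^ (1 - δ) := by
              have heq : ∀ y, (g y ^ δ) ^ (1 / δ) = g y := by
                intro y
                rw [← ENNReal.rpow_mul, mul_one_div_cancel hδ0.ne', ENNReal.rpow_one]
              simp only [heq]
      -- step 3: divide by V
      have hVsub : V ^ (1 - δ) / V = (V ^ δ)⁻¹ := by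
        rw [div_eq_mul_inv, ← ENNReal.rpow_neg_one V, ← ENNReal.rpow_add _ _ hV0 hVt,
          show (1 - δ) + (-1) = -δ by ring, ENNReal.rpow_neg]
      calc (∫⁻ y, eabs ((w y) ^ δ) ((w x) ^ δ) ∂ν) / V
          ≤ ((∫⁻ y, g y ∂ν) ^ δ * V ^ (1 - δ)) / V :=
            ENNReal.div_le_div_right (step1.trans step2) V
        _ = (∫⁻ y, g y ∂ν) ^ δ * (V ^ (1 - δ) / V) := by rw [mul_div_assoc]
        _ = (∫⁻ y, g y ∂ν) ^ δ * (V ^ δ)⁻¹ := by rw [hVsub]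
        _ = ((∫⁻ y, g y ∂ν) / V) ^ δ := by
            rw [ENNReal.div_rpow_of_nonneg _ _ hδ0.le, div_eq_mul_inv]
    -- pass to the limit
    have hcomp : Tendsto
        (fun r : ℝ => ((∫⁻ y in ball x r, g y) / volume (ball x r)) ^ δ)
        (𝓝[>] (0 : ℝ)) (𝓝 0) := by
      have h0 : ((0 : ℝ≥0∞)) ^ δ = 0 := ENNReal.zero_rpow_of_pos hδ0
      have := (ENNReal.continuous_rpow_const (y := δ)).tendsto 0
      rw [h0] at this
      exact this.comp hx
    refine tendsto_of_tendsto_of_tendsto_of_le_of_le' tendsto_const_nhds hcomp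
      (Eventually.of_forall fun r => zero_le) ?_
    filter_upwards [self_mem_nhdsWithin] with r hr
    exact key r hr
  -- conclude
  intro μ hμ
  filter_upwards [happ μ hμ] with x hx using hleb x hx
end

section
/- (Characterization of measures with a.e.-finite maximal function.) Let μ be a positive locally finite Borel measure on ℝ^N and let Mμ(x) = sup{μ(B)/|B| : B an open ball with x ∈ B} denote the uncentered Hardy–Littlewood maximal function. Then the following are equivalent: (1) there exists x₀ ∈ ℝ^N with (Mμ)(x₀) < ∞; (2) there exists x₀ ∈ ℝ^N with limsup_{R→∞} μ(B(x₀,R))/|B(x₀,R)| < ∞; (3) there exists a constant K ≥ 0 such that limsup_{R→∞} μ(B(x,R))/|B(x,R)| = K for all x ∈ ℝ^N; (4) Mμ(x) < ∞ for Lebesgue-a.e. x ∈ ℝ^N. -/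
open MeasureTheory Metric ENNReal Filter
open scoped Topology RealInnerProductSpace ENNReal NNReal

section Aux

variable {N : ℕ}

private lemma vol_ball_scale (x y : Euc N) {r s : ℝ} (hr : 0 < r) (hs : 0 < s) :
    volume (ball y s) = ENNReal.ofReal ((s / r) ^ N) * volume (ball x r) := by
  rw [Measure.addHaar_ball_of_pos volume x hr, Measure.addHaar_ball_of_pos volume y hs,
    finrank_euclideanSpace_fin, ← mul_assoc, ← ENNReal.ofReal_mul (by positivity)]
  rw [div_pow, div_mul_cancel₀]
  exact pow_ne_zero _ hr.ne'

private lemma ratio_le (μ : Measure (Euc N)) {x y : Euc N} {r s : ℝ} (hr : 0 < r) (hs : 0 < s)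
    (hsub : ball x r ⊆ ball y s) :
    μ (ball x r) / volume (ball x r)
      ≤ ENNReal.ofReal ((s / r) ^ N) * (μ (ball y s) / volume (ball y s)) := by
  set c := ENNReal.ofReal ((s / r) ^ N) with hc
  have hc0 : c ≠ 0 := by
    rw [hc, ne_eq, ENNReal.ofReal_eq_zero, not_le]
    positivity
  have hct : c ≠ ⊤ := ENNReal.ofReal_ne_top
  have hV : volume (ball y s) = c * volume (ball x r) := vol_ball_scale x y hr hs
  calc μ (ball x r) / volume (ball x r)
      ≤ μ (ball y s) / volume (ball x r) := ENNReal.div_le_div (measure_mono hsub) le_rfl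
    _ = c * μ (ball y s) / (c * volume (ball x r)) :=
        (ENNReal.mul_div_mul_left _ _ hc0 hct).symm
    _ = c * (μ (ball y s) / volume (ball y s)) := by rw [hV, mul_div_assoc]

private lemma maxFn_le (μ : Measure (Euc N)) (x : Euc N) :
    maxFn μ x ≤ ENNReal.ofReal (2 ^ N) *
      ⨆ (s : ℝ) (_ : 0 < s), μ (ball x s) / volume (ball x s) := by
  refine iSup_le fun z => iSup_le fun r => iSup_le fun hr => iSup_le fun hx => ?_
  have hsub : ball z r ⊆ ball x (2 * r) := fun y hy => by
    rw [mem_ball] at *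
    calc dist y x ≤ dist y z + dist z x := dist_triangle _ _ _
      _ < r + r := add_lt_add hy (by rw [dist_comm]; exact hx)
      _ = 2 * r := by ring
  have h2r : (0:ℝ) < 2 * r := by linarith
  have h := ratio_le μ hr h2r hsub
  rw [show (2 * r) / r = 2 by field_simp] at h
  refine h.trans (mul_le_mul_right ?_ _)
  exact le_iSup_of_le (2 * r) (le_iSup_of_le h2r le_rfl)

private lemma ball_ratio_le_cb (μ : Measure (Euc N)) (x : Euc N) {s : ℝ} (hs : 0 < s) :
    μ (ball x s) / volume (ball x s)
      ≤ ENNReal.ofReal (2 ^ N) * (μ (closedBall x s) / volume (closedBall x s)) := by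
  have hc0 : (ENNReal.ofReal (2 ^ N) : ℝ≥0∞) ≠ 0 := by
    rw [ne_eq, ENNReal.ofReal_eq_zero, not_le]
    positivity
  have hW : volume (closedBall x s) ≤ ENNReal.ofReal (2 ^ N) * volume (ball x s) := by
    have h1 : closedBall x s ⊆ ball x (2 * s) := closedBall_subset_ball (by linarith)
    have h2 : volume (ball x (2 * s)) = ENNReal.ofReal ((2 * s / s) ^ N) * volume (ball x s) :=
      vol_ball_scale x x hs (by linarith)
    rw [show (2 * s) / s = 2 by field_simp] at h2
    exact (measure_mono h1).trans h2.le
  calc μ (ball x s) / volume (ball x s)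
      = ENNReal.ofReal (2 ^ N) * μ (ball x s) / (ENNReal.ofReal (2 ^ N) * volume (ball x s)) :=
        (ENNReal.mul_div_mul_left _ _ hc0 ENNReal.ofReal_ne_top).symm
    _ ≤ ENNReal.ofReal (2 ^ N) * μ (closedBall x s) / volume (closedBall x s) :=
        ENNReal.div_le_div (mul_le_mul_right (measure_mono ball_subset_closedBall) _) hW
    _ = ENNReal.ofReal (2 ^ N) * (μ (closedBall x s) / volume (closedBall x s)) :=
        mul_div_assoc _ _ _

private lemma ae_maxFn_lt_top (μ : Measure (Euc N)) [IsLocallyFiniteMeasure μ] {K : ℝ≥0}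
    (hK : ∀ x : Euc N,
      Filter.limsup (fun R : ℝ => μ (ball x R) / volume (ball x R)) atTop = (K : ℝ≥0∞)) :
    ∀ᵐ x : Euc N ∂volume, maxFn μ x < ⊤ := by
  filter_upwards [Besicovitch.ae_tendsto_rnDeriv μ volume, Measure.rnDeriv_lt_top μ volume]
    with x hx hD
  set D := μ.rnDeriv volume x with hDdef
  have hsmall : ∀ᶠ t in 𝓝[>] (0:ℝ),
      μ (closedBall x t) / volume (closedBall x t) < D + 1 :=
    hx.eventually_lt_const (ENNReal.lt_add_right hD.ne one_ne_zero)
  obtain ⟨ε, hε, hIoo⟩ := mem_nhdsGT_iff_exists_Ioo_subset.1 hsmall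
  rw [Set.mem_Ioi] at hε
  have hlim : ∀ᶠ R in atTop, μ (ball x R) / volume (ball x R) < (K : ℝ≥0∞) + 1 := by
    exact eventually_lt_of_limsup_lt
      (by rw [hK x]; exact ENNReal.lt_add_right ENNReal.coe_ne_top one_ne_zero)
  obtain ⟨R₀, hR₀⟩ := eventually_atTop.1 hlim
  set B : ℝ≥0∞ := (ENNReal.ofReal (2 ^ N) * (D + 1)) ⊔
    (((K : ℝ≥0∞) + 1) ⊔ (μ (closedBall x R₀) / volume (ball x ε))) with hB
  have hBtop : B < ⊤ := by
    rw [hB, sup_lt_iff, sup_lt_iff]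
    refine ⟨?_, ?_, ?_⟩
    · exact ENNReal.mul_lt_top ENNReal.ofReal_lt_top
        (ENNReal.add_lt_top.2 ⟨hD, ENNReal.one_lt_top⟩)
    · exact ENNReal.add_lt_top.2 ⟨ENNReal.coe_lt_top, ENNReal.one_lt_top⟩
    · exact ENNReal.div_lt_top (measure_closedBall_lt_top).ne
        (measure_ball_pos volume x hε).ne'
  have hsup : (⨆ (s : ℝ) (_ : 0 < s), μ (ball x s) / volume (ball x s)) ≤ B := by
    refine iSup_le fun s => iSup_le fun hs => ?_
    rcases lt_or_ge s ε with h | h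
    · exact le_sup_of_le_left ((ball_ratio_le_cb μ x hs).trans
        (mul_le_mul_right (hIoo ⟨hs, h⟩).le _))
    rcases le_or_gt R₀ s with h' | h'
    · exact le_sup_of_le_right (le_sup_of_le_left (hR₀ s h').le)
    · refine le_sup_of_le_right (le_sup_of_le_right ?_)
      exact ENNReal.div_le_div
        (measure_mono ((ball_subset_ball h'.le).trans ball_subset_closedBall))
        (measure_mono (ball_subset_ball h))
  calc maxFn μ x
      ≤ ENNReal.ofReal (2 ^ N) * ⨆ (s : ℝ) (_ : 0 < s), μ (ball x s) / volume (ball x s) :=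
        maxFn_le μ x
    _ ≤ ENNReal.ofReal (2 ^ N) * B := mul_le_mul_right hsup _
    _ < ⊤ := ENNReal.mul_lt_top ENNReal.ofReal_lt_top hBtop

private lemma limsup_le_limsup_pt (μ : Measure (Euc N)) (x y : Euc N)
    (h : Filter.limsup (fun R : ℝ => μ (ball y R) / volume (ball y R)) atTop < ⊤) :
    Filter.limsup (fun R : ℝ => μ (ball x R) / volume (ball x R)) atTop
      ≤ Filter.limsup (fun R : ℝ => μ (ball y R) / volume (ball y R)) atTop := by
  set L := Filter.limsup (fun R : ℝ => μ (ball y R) / volume (ball y R)) atTop with hL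
  refine ENNReal.le_of_forall_pos_le_add fun ε hε _ => ?_
  have hLε : L < L + ε := ENNReal.lt_add_right h.ne (by exact_mod_cast hε.ne')
  obtain ⟨S₀, hS₀⟩ := eventually_atTop.1 (eventually_lt_of_limsup_lt hLε)
  set d := dist x y with hd
  have hd0 : 0 ≤ d := dist_nonneg
  have hbound : ∀ᶠ R in atTop, μ (ball x R) / volume (ball x R)
      ≤ ENNReal.ofReal (((R + d) / R) ^ N) * (L + ε) := by
    filter_upwards [eventually_ge_atTop (max S₀ 1)] with R hR
    have hR1 : (1:ℝ) ≤ R := le_of_max_le_right hR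
    have hRpos : (0:ℝ) < R := by linarith
    have hRd : (0:ℝ) < R + d := by linarith
    have hsub : ball x R ⊆ ball y (R + d) := fun w hw => by
      rw [mem_ball] at *
      calc dist w y ≤ dist w x + dist x y := dist_triangle _ _ _
        _ < R + d := add_lt_add_of_lt_of_le hw le_rfl
    refine (ratio_le μ hRpos hRd hsub).trans (mul_le_mul_right ?_ _)
    exact (hS₀ (R + d) (by linarith [le_of_max_le_left hR])).le
  have hq : Tendsto (fun R : ℝ => ENNReal.ofReal (((R + d) / R) ^ N) * (L + ε))
      atTop (𝓝 (L + ε)) := by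
    have h1 : Tendsto (fun R : ℝ => (R + d) / R) atTop (𝓝 1) := by
      have h0 : Tendsto (fun R : ℝ => 1 + d * R⁻¹) atTop (𝓝 (1 + d * 0)) :=
        tendsto_const_nhds.add (tendsto_const_nhds.mul tendsto_inv_atTop_zero)
      rw [mul_zero, add_zero] at h0
      refine h0.congr' ?_
      filter_upwards [eventually_gt_atTop (0:ℝ)] with R hR
      field_simp
    have h2 : Tendsto (fun R : ℝ => ENNReal.ofReal (((R + d) / R) ^ N)) atTop (𝓝 1) := by
      have := ENNReal.tendsto_ofReal (h1.pow N)
      simpa using this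
    have h3 := ENNReal.Tendsto.mul_const (b := L + ε) h2 (Or.inl one_ne_zero)
    simpa using h3
  calc Filter.limsup (fun R : ℝ => μ (ball x R) / volume (ball x R)) atTop
      ≤ Filter.limsup (fun R : ℝ => ENNReal.ofReal (((R + d) / R) ^ N) * (L + ε)) atTop :=
        limsup_le_limsup hbound
    _ = L + ε := hq.limsup_eq

end Aux

/-- **Characterization of measures with a.e.-finite maximal function.**
For a positive locally finite Borel measure `μ` on `ℝ^N`, the following are equivalent:
(1) `Mμ(x₀) < ∞` for some `x₀`; (2) `limsup_{R→∞} μ(B(x₀,R))/|B(x₀,R)| < ∞` for some `x₀`;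
(3) there is a (finite) constant `K ≥ 0` with `limsup_{R→∞} μ(B(x,R))/|B(x,R)| = K` for
every `x`; (4) `Mμ < ∞` Lebesgue-a.e. -/
theorem stmt_19 {N : ℕ} (μ : Measure (Euc N)) [IsLocallyFiniteMeasure μ] :
    List.TFAE
      [∃ x₀ : Euc N, maxFn μ x₀ < ⊤,
       ∃ x₀ : Euc N,
         Filter.limsup (fun R : ℝ => μ (ball x₀ R) / volume (ball x₀ R)) atTop < ⊤,
       ∃ K : ℝ≥0, ∀ x : Euc N,
         Filter.limsup (fun R : ℝ => μ (ball x R) / volume (ball x R)) atTop = (K : ℝ≥0∞),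
       ∀ᵐ x : Euc N ∂volume, maxFn μ x < ⊤] := by
  tfae_have 1 → 2 := by
    rintro ⟨x₀, hx₀⟩
    refine ⟨x₀, lt_of_le_of_lt (limsup_le_of_le (h := ?_)) hx₀⟩
    filter_upwards [eventually_gt_atTop (0:ℝ)] with R hR
    exact le_iSup_of_le x₀ (le_iSup_of_le R (le_iSup_of_le hR
      (le_iSup_of_le (mem_ball_self hR) le_rfl)))
  tfae_have 2 → 3 := by
    rintro ⟨x₀, hx₀⟩
    refine ⟨(Filter.limsup (fun R : ℝ => μ (ball x₀ R) / volume (ball x₀ R)) atTop).toNNReal,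
      fun x => ?_⟩
    have h1 := limsup_le_limsup_pt μ x x₀ hx₀
    have h2 := limsup_le_limsup_pt μ x₀ x (lt_of_le_of_lt h1 hx₀)
    rw [ENNReal.coe_toNNReal hx₀.ne]
    exact le_antisymm h1 h2
  tfae_have 3 → 4 := by
    rintro ⟨K, hK⟩
    exact ae_maxFn_lt_top μ hK
  tfae_have 4 → 1 := by
    intro h
    have hvol : (volume : Measure (Euc N)) ≠ 0 :=
      Measure.measure_univ_ne_zero.1 (isOpen_univ.measure_ne_zero volume Set.univ_nonempty)
    haveI : (MeasureTheory.ae (volume : Measure (Euc N))).NeBot := ae_neBot.2 hvol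
    exact h.exists
  tfae_finish
end
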